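/- Fix w* > 0 and γ ∈ (1, 2), and define T(w) = w - (γ/σ'(w*))·(σ(w) - σ(w*)). If w_t > w* and w_{t+1} := T(w_t) < w*, then w_{t+2} := T(w_{t+1}) > w* (a crossing from right to left is immediately followed by a crossing back from left to right). -/

import Mathlib

noncomputable def sigmoid (w : ℝ) : ℝ := 1 / (1 + Real.exp (-w))

/-!
Write `p = σ w*` and `s = σ'(w*) = p (1 - p)`. Since `σ' = σ (1 - σ)` decreases on `[0, ∞)`, `σ` is
concave there, so every secant slope to the right of `w*` is at most `s`; together with `σ < 1`
this bounds the overshoot `δ = w* - w_{t+1}` by `(γ - 1) / p`. On the left,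
`σ (w* - δ) = p / (p + (1 - p) e^δ)` and `e^δ > 1 + δ` give a secant slope larger than
`s / (1 + δ p)`, and `1 + δ p ≤ γ` makes the step `γ / s` times that slope exceed `δ`.
-/

open Set

local notation "σ" => Real.sigmoid

theorem sigmoid_eq_real_sigmoid : sigmoid = σ := by
  funext w
  rw [sigmoid, Real.sigmoid_def, one_div]

theorem Real.half_le_sigmoid {x : ℝ} (hx : 0 ≤ x) : 1 / 2 ≤ σ x := by
  simpa [Real.sigmoid_zero] using Real.sigmoid_le hx

theorem Real.sigmoid_add (x y : ℝ) :
    σ (x + y) = σ x / (σ x + (1 - σ x) * Real.exp (-y)) := by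
  have hx := Real.sigmoid_pos x
  rw [← Real.sigmoid_neg, ← Real.sigmoid_mul_rexp_neg, Real.sigmoid_def, Real.sigmoid_def,
    neg_add, Real.exp_add]
  field_simp

theorem Real.concaveOn_sigmoid : ConcaveOn ℝ (Ici 0) σ := by
  refine AntitoneOn.concaveOn_of_deriv (convex_Ici 0) continuous_sigmoid.continuousOn
    differentiable_sigmoid.differentiableOn ?_
  rw [interior_Ici, Real.deriv_sigmoid]
  intro x hx y _ hxy
  have hσ : σ x ≤ σ y := Real.sigmoid_le hxy
  have hhalf := Real.half_le_sigmoid (le_of_lt hx)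
  dsimp only
  nlinarith

theorem Real.sigmoid_sub_le {x y : ℝ} (hx : 0 ≤ x) (hxy : x < y) :
    σ y - σ x ≤ σ x * (1 - σ x) * (y - x) := by
  have hslope := Real.concaveOn_sigmoid.slope_le_deriv hx (hx.trans hxy.le) hxy
    differentiable_sigmoid.differentiableAt
  rwa [Real.deriv_sigmoid, slope_def_field, div_le_iff₀ (sub_pos.2 hxy)] at hslope

theorem Real.sigmoid_step_overshoot_le {x y γ : ℝ} (hx : 0 ≤ x) (hxy : x < y) (hγ : 1 ≤ γ) :
    γ / (σ x * (1 - σ x)) * (σ y - σ x) - (y - x) ≤ (γ - 1) / σ x := by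
  have hp := Real.sigmoid_pos x
  have hq : 0 < 1 - σ x := sub_pos.2 (Real.sigmoid_lt_one x)
  have hgap : σ y - σ x ≤ 1 - σ x := by linarith [Real.sigmoid_lt_one y]
  have hsecant : (σ y - σ x) / (σ x * (1 - σ x)) ≤ y - x := by
    rw [div_le_iff₀ (by positivity)]
    linarith [Real.sigmoid_sub_le hx hxy]
  calc γ / (σ x * (1 - σ x)) * (σ y - σ x) - (y - x)
      ≤ (γ - 1) * ((σ y - σ x) / (σ x * (1 - σ x))) := by
        rw [sub_mul, one_mul, mul_div_assoc', div_mul_eq_mul_div]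
        linarith
    _ ≤ (γ - 1) * ((1 - σ x) / (σ x * (1 - σ x))) := by gcongr
    _ = (γ - 1) / σ x := by field_simp

theorem Real.lt_sigmoid_step_of_le {x δ γ : ℝ} (hx : 0 ≤ x) (hδ : 0 < δ)
    (hδγ : δ ≤ (γ - 1) / σ x) :
    δ < γ / (σ x * (1 - σ x)) * (σ x - σ (x - δ)) := by
  have hp := Real.sigmoid_pos x
  have hq : 0 < 1 - σ x := sub_pos.2 (Real.sigmoid_lt_one x)
  have hhalf := Real.half_le_sigmoid hx
  have hγ : 1 + δ * σ x ≤ γ := by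
    rw [le_div_iff₀ hp] at hδγ
    linarith
  have hexp : δ < Real.exp δ - 1 := by linarith [Real.add_one_lt_exp hδ.ne']
  have hden : 0 < σ x + (1 - σ x) * Real.exp δ := by positivity
  have hstep : γ / (σ x * (1 - σ x)) * (σ x - σ (x - δ))
      = γ * (Real.exp δ - 1) / (σ x + (1 - σ x) * Real.exp δ) := by
    rw [sub_eq_add_neg x δ, Real.sigmoid_add, neg_neg]
    field_simp
    ring
  have hkey : δ * (σ x + (1 - σ x) * Real.exp δ) < (1 + δ * σ x) * (Real.exp δ - 1) := by
    nlinarith [mul_nonneg hδ.le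
      (mul_nonneg (by linarith : 0 ≤ 2 * σ x - 1) (by linarith : 0 ≤ Real.exp δ - 1))]
  have hγexp : (1 + δ * σ x) * (Real.exp δ - 1) ≤ γ * (Real.exp δ - 1) :=
    mul_le_mul_of_nonneg_right hγ (by linarith)
  rw [hstep, lt_div_iff₀ hden]
  linarith

theorem double_crossing_general
    (wstar γ : ℝ) (hwstar : 0 < wstar) (hγ1 : 1 < γ)
    (T : ℝ → ℝ)
    (hT : ∀ w, T w = w - (γ / deriv sigmoid wstar) * (sigmoid w - sigmoid wstar))
    (wt : ℝ) (hwt : wstar < wt) (hcross : T wt < wstar) :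
    wstar < T (T wt) := by
  rw [sigmoid_eq_real_sigmoid, Real.deriv_sigmoid] at hT
  set δ := wstar - T wt with hδ
  have hovershoot : δ ≤ (γ - 1) / σ wstar := by
    have := Real.sigmoid_step_overshoot_le hwstar.le hwt hγ1.le
    rw [hδ, hT wt]
    linarith
  have hcrossback := Real.lt_sigmoid_step_of_le hwstar.le (sub_pos.2 hcross) hovershoot
  rw [hT (T wt), show T wt = wstar - δ by ring]
  linarith

theorem double_crossing
    (wstar γ : ℝ) (hwstar : 0 < wstar) (hγ1 : 1 < γ) (hγ2 : γ < 2)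
    (T : ℝ → ℝ)
    (hT : ∀ w, T w = w - (γ / deriv sigmoid wstar) * (sigmoid w - sigmoid wstar))
    (wt : ℝ) (hwt : wstar < wt) (hcross : T wt < wstar) :
    wstar < T (T wt) :=
  double_crossing_general wstar γ hwstar hγ1 T hT wt hwt hcross
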